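/- Let G be a group, let h, a, b ∈ G, and set c = h⁻¹ * a * h. If c commutes with b, then a * b * a⁻¹ * b⁻¹ = h * (c * h⁻¹ * c⁻¹) * (b * c * h * c⁻¹ * b⁻¹) * (b * h⁻¹ * b⁻¹). In particular, the commutator [a,b] is a product of four conjugates of h and h⁻¹. -/

import Mathlib

/-!
Since `a = h c h⁻¹`, the commutator is `h c h⁻¹ b h c⁻¹ h⁻¹ b⁻¹`; inserting `c⁻¹ b c = b` after
`h c h⁻¹` and regrouping gives the product `h · (c h⁻¹ c⁻¹) · ((b c) h (b c)⁻¹) · (b h⁻¹ b⁻¹)`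
of four conjugates of `h^{±1}`.
-/

theorem commutator_eq_of_commute_conj {G : Type*} [Group G] {h a b c : G}
    (hc : c = h⁻¹ * a * h) (hcomm : Commute c b) :
    a * b * a⁻¹ * b⁻¹ =
      h * (c * h⁻¹ * c⁻¹) * (b * c * h * c⁻¹ * b⁻¹) * (b * h⁻¹ * b⁻¹) := by
  have ha : a = h * c * h⁻¹ := by rw [hc]; group
  have hb : c⁻¹ * b * c = b := by rw [mul_assoc, ← hcomm.eq]; group
  calc a * b * a⁻¹ * b⁻¹ = h * c * h⁻¹ * b * h * c⁻¹ * h⁻¹ * b⁻¹ := by rw [ha]; group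
    _ = h * c * h⁻¹ * (c⁻¹ * b * c) * h * c⁻¹ * h⁻¹ * b⁻¹ := by rw [hb]
    _ = _ := by group

/-- Tsuboi's displacement trick (algebraic core): if `c = h⁻¹ a h` commutes with `b`,
then the commutator `[a,b]` has the given expression, and in particular is a product of
four conjugates of `h` and `h⁻¹`. -/
theorem stmt0 {G : Type*} [Group G] (h a b c : G) (hc : c = h⁻¹ * a * h)
    (hcomm : Commute c b) :
    a * b * a⁻¹ * b⁻¹ =
      h * (c * h⁻¹ * c⁻¹) * (b * c * h * c⁻¹ * b⁻¹) * (b * h⁻¹ * b⁻¹) ∧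
    ∃ (g₁ g₂ g₃ g₄ : G) (e₁ e₂ e₃ e₄ : Bool),
      a * b * a⁻¹ * b⁻¹ =
        (g₁ * (if e₁ then h else h⁻¹) * g₁⁻¹) * (g₂ * (if e₂ then h else h⁻¹) * g₂⁻¹) *
        (g₃ * (if e₃ then h else h⁻¹) * g₃⁻¹) * (g₄ * (if e₄ then h else h⁻¹) * g₄⁻¹) := by
  have key := commutator_eq_of_commute_conj hc hcomm
  refine ⟨key, 1, c, b * c, b, true, false, true, false, ?_⟩
  simp only [Bool.false_eq_true, if_true, if_false]
  rw [key]
  group
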